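/- arXiv:1712.08136 — 2 statements merged into one kernel-verified Lean document; each statement's English description precedes it below -/
import Mathlib

section
/- Let Σ be a face of a 2-cell embedded graph in an orientable surface whose boundary walk has 2k edges, alternating between saddle vertices and extremum (max/min) vertices, and glue two copies of the closed disk Σ along their common boundary to obtain a 2-sphere with a cell decomposition having 2k boundary vertices, 2k boundary edges, and 2 faces. If each saddle vertex has index 0, each extremum vertex has index 1, and the total index equals 2, then the number of extremum vertices on the boundary is 2, hence k = 2. -/
/-- Doubling argument for a face: a face with simple boundary walk of length `2k`
alternating saddle vertices (index 0) and extremum vertices (index 1), glued to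
a copy of itself along the boundary, yields a 2-sphere; the index count
`Σ indices = χ(S²) = 2` forces the number of extrema on the boundary to be 2,
hence `k = 2` and the boundary walk has 4 edges. -/
theorem doubled_face_index_count_forces_quadrilateral
    (V : Type)
    (k : ℕ) (hk : 1 ≤ k)
    -- the boundary walk of the face, of length 2k
    (w : ℕ → V)
    (hper : ∀ i, w (i + 2 * k) = w i)
    -- the walk is a simple cycle
    (hinj : ∀ i j, i < 2 * k → j < 2 * k → w i = w j → i = j)
    -- labels: saddle vertices at even positions, extremum vertices at odd positions
    (isSaddle isExtremum : V → Prop)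
    (hsad : ∀ i, i < 2 * k → Even i → isSaddle (w i))
    (hext : ∀ i, i < 2 * k → Odd i → isExtremum (w i))
    -- indices: saddles contribute 0, extrema contribute 1
    (idx : V → ℕ)
    (hidx0 : ∀ v, isSaddle v → idx v = 0)
    (hidx1 : ∀ v, isExtremum v → idx v = 1)
    -- the total index on the doubled sphere equals χ(S²) = 2
    (hsum : ∑ i ∈ Finset.range (2 * k), idx (w i) = 2) :
    k = 2 ∧ 2 * k = 4 := by
  have key : ∀ n : ℕ, ∑ i ∈ Finset.range (2 * n), (if Even i then 0 else 1) = n := by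
    intro n
    induction n with
    | zero => simp
    | succ m ih =>
      have : 2 * (m + 1) = (2 * m) + 1 + 1 := by ring
      rw [this, Finset.sum_range_succ, Finset.sum_range_succ, ih]
      simp [Nat.even_add_one, parity_simps]
  have heq : ∑ i ∈ Finset.range (2 * k), idx (w i)
      = ∑ i ∈ Finset.range (2 * k), (if Even i then 0 else 1) := by
    apply Finset.sum_congr rfl
    intro i hi
    rw [Finset.mem_range] at hi
    by_cases h : Even i
    · simp [h, hidx0 _ (hsad i hi h)]
    · simp [h, hidx1 _ (hext i hi (Nat.not_even_iff_odd.mp h))]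
  rw [heq, key] at hsum
  exact ⟨hsum, by omega⟩
end

section
/- Under the induced Morse matching M = M_V ∪ M_F of a discrete gradient line field (K, M_V) on a compact orientable surface S (excluding the sphere cases of Lemmas on index-1 faces and cycles in G), the sum of Forman indices (-1)^dim over critical cells of M equals Σ_{v unmatched} 1 + Σ_{Σ: C(Σ)≠2} (1 - C(Σ)/2). Equivalently: (number of critical vertices) - (number of critical edges) + (number of critical faces of M) = Σ_v index(v) + Σ_Σ index(Σ). -/
/-- The counting identity for the induced Morse matching `M = M_V ∪ M_F` of a
discrete gradient line field `(K, M_V)`: Forman's alternating sum over critical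
cells of `M` (critical vertices − critical edges + critical faces, where there is
exactly one critical edge per component of the unmatched-edge graph `G` and the
critical faces are those with `C(f) ≠ 2`) equals the line-field index sum
`Σ_v index(v) + Σ_f index(f)`. -/
theorem forman_alternating_sum_eq_line_field_index_sum
    (V E F : Type) [Fintype V] [Fintype E] [Fintype F]
    (b : E → F → ℕ)
    -- each edge of K lies in exactly two face boundary walks
    (hTwo : ∀ e : E, ∑ f : F, b e f = 2)
    (inc : V → E → Prop)
    -- the acyclic vertex-edge matching M_V
    (MV : Finset (V × E))
    (hMVinc : ∀ p ∈ MV, inc p.1 p.2)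
    (hMVv : ∀ p ∈ MV, ∀ q ∈ MV, p.1 = q.1 → p = q)
    (hMVe : ∀ p ∈ MV, ∀ q ∈ MV, p.2 = q.2 → p = q)
    (unm : E → Prop) [DecidablePred unm]
    (hUnm : ∀ e, unm e ↔ ∀ v, (v, e) ∉ MV)
    (C : F → ℕ) [DecidableEq F]
    (hC : ∀ f : F, C f = ∑ e ∈ Finset.univ.filter unm, b e f)
    -- the components of the graph G on unmatched edges, indexed by ι; each
    -- component is a tree, so #vertices of G = #edges of G + #components
    (ι : Type) [Fintype ι]
    (hForest : (Finset.univ.filter unm).card =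
      (Finset.univ.filter (fun f : F => C f = 2)).card + Fintype.card ι)
    -- m₀ = number of critical vertices (unmatched vertices of M_V)
    (m₀ : ℕ) [DecidablePred fun v : V => ∀ e, (v, e) ∉ MV]
    (hm₀ : m₀ = (Finset.univ.filter fun v : V => ∀ e, (v, e) ∉ MV).card) :
    -- Forman's alternating sum = line-field index sum:
    (m₀ : ℚ) - Fintype.card ι +
        (Finset.univ.filter (fun f : F => C f ≠ 2)).card =
      m₀ + ∑ f : F, (1 - (C f : ℚ) / 2) := by
  have hsum : ∑ f : F, (C f : ℚ) = 2 * (Finset.univ.filter unm).card := by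
    have h1 : ∑ f : F, (C f : ℚ)
        = ∑ f : F, ∑ e ∈ Finset.univ.filter unm, (b e f : ℚ) := by
      refine Finset.sum_congr rfl fun f _ => ?_
      rw [hC f]; push_cast; ring
    rw [h1, Finset.sum_comm]
    have h2 : ∀ e : E, ∑ f : F, (b e f : ℚ) = 2 := by
      intro e
      exact_mod_cast congrArg (Nat.cast : ℕ → ℚ) (hTwo e)
    rw [Finset.sum_congr rfl fun e _ => h2 e]
    simp [mul_comm]
  have hcards : ((Finset.univ.filter (fun f : F => C f = 2)).card : ℚ)
      + (Finset.univ.filter (fun f : F => C f ≠ 2)).card = Fintype.card F := by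
    have := Finset.card_filter_add_card_filter_not
      (s := (Finset.univ : Finset F)) (p := fun f => C f = 2)
    exact_mod_cast this
  have hF : ((Finset.univ.filter unm).card : ℚ)
      = (Finset.univ.filter (fun f : F => C f = 2)).card + Fintype.card ι := by
    exact_mod_cast hForest
  have hrhs : ∑ f : F, (1 - (C f : ℚ) / 2)
      = Fintype.card F - (∑ f : F, (C f : ℚ)) / 2 := by
    rw [Finset.sum_sub_distrib, ← Finset.sum_div]
    simp [Finset.card_univ]
  rw [hrhs, hsum]
  linarith
end
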